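/- Assume d = 1/4 (with a, b, e ∈ ℝ arbitrary). Let u be a solution of the Longstaff–Schwartz equation on Ω, and let ε ∈ ℝ. Then the function w(x,y,t) = u( x, (2·e^{et/2}·√y − ε)² · e^{-et}/4, t ) satisfies the Longstaff–Schwartz equation at every point (x,y,t) ∈ Ω with 2·e^{et/2}·√y > ε. -/

import Mathlib

/-- Partial derivative in `x`. -/
noncomputable def pdX (u : ℝ → ℝ → ℝ → ℝ) (x y t : ℝ) : ℝ := deriv (fun z => u z y t) x

/-- Partial derivative in `y`. -/
noncomputable def pdY (u : ℝ → ℝ → ℝ → ℝ) (x y t : ℝ) : ℝ := deriv (fun z => u x z t) y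

/-- Partial derivative in `t`. -/
noncomputable def pdT (u : ℝ → ℝ → ℝ → ℝ) (x y t : ℝ) : ℝ := deriv (fun z => u x y z) t

/-- Second partial derivative in `x`. -/
noncomputable def pdXX (u : ℝ → ℝ → ℝ → ℝ) (x y t : ℝ) : ℝ := deriv (fun z => pdX u z y t) x

/-- Second partial derivative in `y`. -/
noncomputable def pdYY (u : ℝ → ℝ → ℝ → ℝ) (x y t : ℝ) : ℝ := deriv (fun z => pdY u x z t) y

/-- The domain `Ω = {(x,y,t) : x > 0, y > 0}`. -/
def Omega : Set (ℝ × ℝ × ℝ) := {p | 0 < p.1 ∧ 0 < p.2.1}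

/-- The Longstaff–Schwartz (Kolmogorov backward) equation
`u_t = −((a−bx)·u_x + (d−ey)·u_y + (x/2)·u_xx + (y/2)·u_yy)` holds at the point `(x,y,t)`. -/
def LSEq (a b d e : ℝ) (u : ℝ → ℝ → ℝ → ℝ) (x y t : ℝ) : Prop :=
  pdT u x y t =
    -((a - b * x) * pdX u x y t + (d - e * y) * pdY u x y t +
      x / 2 * pdXX u x y t + y / 2 * pdYY u x y t)

/-- `u` is a solution of the Longstaff–Schwartz equation on `Ω`: it is C² on `Ω` and
satisfies the equation at every point of `Ω`. -/
def IsLSSolution (a b d e : ℝ) (u : ℝ → ℝ → ℝ → ℝ) : Prop :=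
  ContDiffOn ℝ 2 (fun p : ℝ × ℝ × ℝ => u p.1 p.2.1 p.2.2) Omega ∧
  ∀ x y t : ℝ, 0 < x → 0 < y → LSEq a b d e u x y t

/-! The substitution `√y ↦ √y - c(t)` with `c(t) = ε / (2 e^{et/2})` turns `u` into
`w(x, y, t) = u(x, (√y - c)², t)`. By the chain rule `w_y = (1 - c/√y) u_y`,
`w_yy = (1 - c/√y)² u_yy + c/(2y√y) u_y` and `w_t = e c (√y - c) u_y + u_t`, since `c' = -(e/2) c`.
As `y (1 - c/√y)² = (√y - c)²`, the second-order terms of the equation for `w` at `(x, y, t)` are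
those of the equation for `u` at `(x, (√y - c)², t)`; among the `u_y` terms, the term `c/(4√y) u_y`
coming from `w_yy` cancels the one from the drift `d (1 - c/√y) u_y` exactly when `d = 1/4`,
and the remaining ones cancel against the `u_y` term of `w_t`. -/

open Function Filter Topology Real

lemma isOpen_Omega : IsOpen Omega :=
  (isOpen_lt continuous_const continuous_fst).inter
    (isOpen_lt continuous_const (continuous_fst.comp continuous_snd))

section PartialDerivatives

variable {u : ℝ → ℝ → ℝ → ℝ} {x y t : ℝ}

lemma pdY_eq_fderiv (hu : DifferentiableAt ℝ (↿u) (x, y, t)) :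
    pdY u x y t = fderiv ℝ (↿u) (x, y, t) (0, 1, 0) :=
  (hu.hasFDerivAt.comp_hasDerivAt (f := fun z : ℝ => ((x, z, t) : ℝ × ℝ × ℝ)) y
    ((hasDerivAt_const y x).prodMk ((hasDerivAt_id y).prodMk (hasDerivAt_const y t)))).deriv

lemma pdT_eq_fderiv (hu : DifferentiableAt ℝ (↿u) (x, y, t)) :
    pdT u x y t = fderiv ℝ (↿u) (x, y, t) (0, 0, 1) :=
  (hu.hasFDerivAt.comp_hasDerivAt (f := fun z : ℝ => ((x, y, z) : ℝ × ℝ × ℝ)) t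
    ((hasDerivAt_const t x).prodMk ((hasDerivAt_const t y).prodMk (hasDerivAt_id t)))).deriv

lemma hasDerivAt_pdY (hu : DifferentiableAt ℝ (↿u) (x, y, t)) :
    HasDerivAt (fun z => u x z t) (pdY u x y t) y :=
  (hu.comp (f := fun z : ℝ => ((x, z, t) : ℝ × ℝ × ℝ)) y (by fun_prop)).hasDerivAt

lemma differentiableAt_pdY {s : Set (ℝ × ℝ × ℝ)} (hu : ContDiffOn ℝ 2 (↿u) s) (hs : IsOpen s)
    (hp : (x, y, t) ∈ s) : DifferentiableAt ℝ (fun z => pdY u x z t) y := by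
  have hcurve : Differentiable ℝ fun z : ℝ => ((x, z, t) : ℝ × ℝ × ℝ) := by fun_prop
  have hmem : ∀ᶠ z in 𝓝 y, (x, z, t) ∈ s :=
    hcurve.continuous.continuousAt.preimage_mem_nhds (hs.mem_nhds hp)
  have hfd : DifferentiableAt ℝ (fun q => fderiv ℝ (↿u) q (0, 1, 0)) (x, y, t) :=
    (((hu.fderiv_of_isOpen hs (by norm_num)).differentiableOn one_ne_zero).clm_apply
      (differentiableOn_const _)).differentiableAt (hs.mem_nhds hp)
  refine (hfd.comp y (hcurve y)).congr_of_eventuallyEq ?_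
  filter_upwards [hmem] with z hz
  exact pdY_eq_fderiv ((hu.differentiableOn (by norm_num)).differentiableAt (hs.mem_nhds hz))

end PartialDerivatives

section ChangeOfVariable

variable {u : ℝ → ℝ → ℝ → ℝ} {g : ℝ → ℝ → ℝ} {x y t : ℝ}

lemma pdX_comp : pdX (fun x y t => u x (g y t) t) x y t = pdX u x (g y t) t := rfl

lemma pdXX_comp : pdXX (fun x y t => u x (g y t) t) x y t = pdXX u x (g y t) t := rfl

lemma pdY_comp (hu : DifferentiableAt ℝ (↿u) (x, g y t, t)) {gy : ℝ}
    (hg : HasDerivAt (g · t) gy y) :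
    pdY (fun x y t => u x (g y t) t) x y t = pdY u x (g y t) t * gy := by
  exact ((hasDerivAt_pdY hu).comp y hg).deriv

lemma pdT_comp (hu : DifferentiableAt ℝ (↿u) (x, g y t, t)) {gt : ℝ}
    (hg : HasDerivAt (g y ·) gt t) :
    pdT (fun x y t => u x (g y t) t) x y t = pdY u x (g y t) t * gt + pdT u x (g y t) t := by
  have hcurve : HasDerivAt (fun τ => ((x, g y τ, τ) : ℝ × ℝ × ℝ)) (0, gt, 1) t :=
    (hasDerivAt_const t x).prodMk (hg.prodMk (hasDerivAt_id t))
  have hsplit : ((0 : ℝ), gt, (1 : ℝ)) = gt • ((0 : ℝ), (1 : ℝ), (0 : ℝ)) + (0, 0, 1) := by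
    simp
  have h := (hu.hasFDerivAt.comp_hasDerivAt t hcurve).deriv
  rw [hsplit, map_add, map_smul, smul_eq_mul, ← pdY_eq_fderiv hu, ← pdT_eq_fderiv hu] at h
  exact h.trans (by ring)

lemma pdYY_comp {s : Set (ℝ × ℝ × ℝ)} (hu : ContDiffOn ℝ 2 (↿u) s) (hs : IsOpen s)
    {gy : ℝ → ℝ} {gyy : ℝ}
    (hg : ∀ᶠ z in 𝓝 y, (x, g z t, t) ∈ s ∧ HasDerivAt (g · t) (gy z) z)
    (hgy : HasDerivAt gy gyy y) :
    pdYY (fun x y t => u x (g y t) t) x y t =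
      pdYY u x (g y t) t * gy y ^ 2 + pdY u x (g y t) t * gyy := by
  have hdiff : ∀ q ∈ s, DifferentiableAt ℝ (↿u) q := fun q hq =>
    (hu.differentiableOn (by norm_num)).differentiableAt (hs.mem_nhds hq)
  obtain ⟨hmem, hgy0⟩ := hg.self_of_nhds
  have hpdY : HasDerivAt (fun z => pdY u x (g z t) t) (pdYY u x (g y t) t * gy y) y :=
    (differentiableAt_pdY hu hs hmem).hasDerivAt.comp y hgy0
  have heq : (fun z => pdY (fun x y t => u x (g y t) t) x z t) =ᶠ[𝓝 y]
      fun z => pdY u x (g z t) t * gy z := by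
    filter_upwards [hg] with z ⟨hz, hgz⟩
    exact pdY_comp (hdiff _ hz) hgz
  rw [pdYY, heq.deriv_eq]
  exact (hpdY.mul hgy).deriv.trans (by ring)

end ChangeOfVariable

noncomputable def shiftCoeff (e ε t : ℝ) : ℝ := ε / (2 * exp (e * t / 2))

lemma hasDerivAt_shiftCoeff (e ε t : ℝ) :
    HasDerivAt (shiftCoeff e ε) (-(e / 2) * shiftCoeff e ε t) t := by
  have h : HasDerivAt (fun τ => 2 * exp (e * τ / 2)) (2 * (exp (e * t / 2) * (e / 2))) t := by
    simpa using ((((hasDerivAt_id t).const_mul e).div_const 2).exp).const_mul 2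
  refine ((hasDerivAt_const t ε).div h (by positivity)).congr_deriv ?_
  simp only [shiftCoeff]
  field_simp
  ring

lemma hasDerivAt_sqrt_sub_sq (c : ℝ) {y : ℝ} (hy : 0 < y) :
    HasDerivAt (fun z => (√z - c) ^ 2) (1 - c / √y) y := by
  refine (((hasDerivAt_sqrt hy.ne').sub_const c).pow 2).congr_deriv ?_
  field_simp
  ring

lemma hasDerivAt_one_sub_div_sqrt (c : ℝ) {y : ℝ} (hy : 0 < y) :
    HasDerivAt (fun z => 1 - c / √z) (c / (2 * y * √y)) y := by
  have hs : 0 < √y := sqrt_pos.2 hy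
  refine (((hasDerivAt_const y c).div (hasDerivAt_sqrt hy.ne') hs.ne').const_sub 1).congr_deriv ?_
  field_simp
  rw [sq_sqrt hy.le]
  ring

lemma hasDerivAt_sqrt_sub_shiftCoeff_sq (e ε y t : ℝ) :
    HasDerivAt (fun τ => (√y - shiftCoeff e ε τ) ^ 2)
      (e * shiftCoeff e ε t * (√y - shiftCoeff e ε t)) t := by
  refine (((hasDerivAt_const t √y).sub (hasDerivAt_shiftCoeff e ε t)).pow 2).congr_deriv ?_
  simp only [Pi.sub_apply]
  ring

lemma shiftCoeff_lt_iff {e ε t r : ℝ} : shiftCoeff e ε t < r ↔ ε < 2 * exp (e * t / 2) * r := by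
  rw [shiftCoeff, div_lt_iff₀ (by positivity), mul_comm r]

lemma sub_sq_mul_exp_neg_div_four (e ε t r : ℝ) :
    (2 * exp (e * t / 2) * r - ε) ^ 2 * exp (-(e * t)) / 4 = (r - shiftCoeff e ε t) ^ 2 := by
  have hexp : exp (-(e * t)) = (exp (e * t / 2) ^ 2)⁻¹ := by
    rw [← exp_nat_mul, ← exp_neg]
    ring_nf
  rw [shiftCoeff, hexp]
  field_simp
  ring

theorem lsEq_sqrt_sub_shiftCoeff_sq {a b e ε x y t : ℝ} {u : ℝ → ℝ → ℝ → ℝ}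
    (hu : IsLSSolution a b (1 / 4) e u) (hx : 0 < x) (hy : 0 < y)
    (hc : shiftCoeff e ε t < √y) :
    LSEq a b (1 / 4) e (fun x y t => u x ((√y - shiftCoeff e ε t) ^ 2) t) x y t := by
  set g : ℝ → ℝ → ℝ := fun y t => (√y - shiftCoeff e ε t) ^ 2 with hg_def
  set c := shiftCoeff e ε t with hc_def
  have hnear : ∀ᶠ z in 𝓝 y, 0 < z ∧ c < √z :=
    (eventually_gt_nhds hy).and (continuous_sqrt.continuousAt.eventually (eventually_gt_nhds hc))
  have hg : ∀ᶠ z in 𝓝 y, (x, g z t, t) ∈ Omega ∧ HasDerivAt (g · t) (1 - c / √z) z := by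
    filter_upwards [hnear] with z ⟨hz, hcz⟩
    exact ⟨⟨hx, pow_pos (sub_pos.2 hcz) 2⟩, hasDerivAt_sqrt_sub_sq c hz⟩
  obtain ⟨hmem, hgy⟩ := hg.self_of_nhds
  have hdiff : DifferentiableAt ℝ (↿u) (x, g y t, t) :=
    (hu.1.differentiableOn (by norm_num)).differentiableAt (isOpen_Omega.mem_nhds hmem)
  have hU := hu.2 x _ t hx hmem.2
  change LSEq a b (1 / 4) e (fun x y t => u x (g y t) t) x y t
  unfold LSEq at hU ⊢
  rw [pdT_comp hdiff (hasDerivAt_sqrt_sub_shiftCoeff_sq e ε y t), pdX_comp, pdXX_comp,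
    pdY_comp hdiff hgy, pdYY_comp hu.1 isOpen_Omega hg (hasDerivAt_one_sub_div_sqrt c hy), hU]
  have hs : 0 < √y := sqrt_pos.2 hy
  have hy' : y = √y ^ 2 := (sq_sqrt hy.le).symm
  simp only [hg_def, ← hc_def]
  -- with `y = r²` the remaining identity is a rational one in `r`
  generalize √y = r at hs hy'
  subst hy'
  field_simp
  ring

/-- Symmetry of the Longstaff–Schwartz equation when `d = 1/4` (subcase 4.1, group `G₄`). -/
theorem ls_symmetry_d_quarter_translation (a b d e : ℝ) (hd : d = 1 / 4)
    (u : ℝ → ℝ → ℝ → ℝ) (hu : IsLSSolution a b d e u) (ε : ℝ) :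
    ∀ x y t : ℝ, 0 < x → 0 < y → 2 * Real.exp (e * t / 2) * Real.sqrt y > ε →
      LSEq a b d e
        (fun x y t =>
          u x ((2 * Real.exp (e * t / 2) * Real.sqrt y - ε) ^ 2 * Real.exp (-(e * t)) / 4) t)
        x y t := by
  subst hd
  intro x y t hx hy hε
  simp only [sub_sq_mul_exp_neg_div_four]
  exact lsEq_sqrt_sub_shiftCoeff_sq hu hx hy (shiftCoeff_lt_iff.2 hε)
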